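/- arXiv:math/0607427 — 2 statements merged into one kernel-verified Lean document; each statement's English description precedes it below -/
import Mathlib

section
/- Every permutation σ ∈ S_n with n ≥ 1 factors uniquely as σ = σ₁ × σ₂ × … × σ_k where each σ_i is a connected permutation (block concatenation of connected permutations); consequently, the algebra (⊕_n k[S_n], ×) under block concatenation is a free associative algebra on the set of connected permutations. -/
/-- The block permutation `σ × τ ∈ S_{p+q}`. -/
def blockProd {p q : ℕ} (σ : Equiv.Perm (Fin p)) (τ : Equiv.Perm (Fin q)) :
    Equiv.Perm (Fin (p + q)) :=
  finSumFinEquiv.symm.trans ((Equiv.sumCongr σ τ).trans finSumFinEquiv)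

/-- The graded set of all permutations, `⊔_n S_n`. -/
abbrev PermSigma : Type := Σ n : ℕ, Equiv.Perm (Fin n)

/-- Block concatenation on `⊔_n S_n`. -/
def concatProd (s t : PermSigma) : PermSigma :=
  ⟨s.1 + t.1, blockProd s.2 t.2⟩

/-- A permutation `σ ∈ S_n`, `n ≥ 1`, is connected if it admits no factorization
`σ = ρ × τ` with `ρ ∈ S_p`, `τ ∈ S_q`, `p, q > 0`. -/
def Connected (s : PermSigma) : Prop :=
  0 < s.1 ∧ ¬∃ t u : PermSigma, 0 < t.1 ∧ 0 < u.1 ∧ s = concatProd t u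

lemma blockProd_apply_val {p q : ℕ} (σ : Equiv.Perm (Fin p)) (τ : Equiv.Perm (Fin q))
    (i : ℕ) (hi : i < p + q) :
    ((blockProd σ τ) ⟨i, hi⟩).val =
      if h : i < p then (σ ⟨i, h⟩).val else p + (τ ⟨i - p, by omega⟩).val := by
  by_cases h : i < p
  · have hs : finSumFinEquiv.symm ⟨i, hi⟩ = Sum.inl ⟨i, h⟩ := by
      rw [Equiv.symm_apply_eq]; ext; simp
    simp [blockProd, hs, h]
  · have hq : i - p < q := by omega
    have hs : finSumFinEquiv.symm ⟨i, hi⟩ = Sum.inr ⟨i - p, hq⟩ := by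
      rw [Equiv.symm_apply_eq]; ext; simp; omega
    simp [blockProd, hs, h]

lemma permSigma_ext {m n : ℕ} {σ : Equiv.Perm (Fin m)} {τ : Equiv.Perm (Fin n)} (h : m = n)
    (h2 : ∀ i (hi : i < m), (σ ⟨i, hi⟩).val = (τ ⟨i, h ▸ hi⟩).val) :
    (⟨m, σ⟩ : PermSigma) = ⟨n, τ⟩ := by
  subst h
  congr 1
  ext x
  simpa [Fin.eta] using h2 x.val x.isLt

lemma concatProd_fst (s t : PermSigma) : (concatProd s t).1 = s.1 + t.1 := rfl

lemma concatProd_one_left (s : PermSigma) : concatProd ⟨0, 1⟩ s = s := by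
  obtain ⟨n, σ⟩ := s
  show (⟨0 + n, blockProd 1 σ⟩ : PermSigma) = ⟨n, σ⟩
  apply permSigma_ext (by omega)
  intro i hi
  rw [blockProd_apply_val]
  simp

lemma concatProd_assoc (a b c : PermSigma) :
    concatProd (concatProd a b) c = concatProd a (concatProd b c) := by
  obtain ⟨p, σ⟩ := a; obtain ⟨q, τ⟩ := b; obtain ⟨r, ρ⟩ := c
  show (⟨p + q + r, blockProd (blockProd σ τ) ρ⟩ : PermSigma) =
    ⟨p + (q + r), blockProd σ (blockProd τ ρ)⟩
  apply permSigma_ext (by omega)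
  intro i hi
  simp only [blockProd_apply_val]
  split_ifs <;> first | omega | (simp [Nat.sub_sub]; omega)

section Split
variable {n p : ℕ} (σ : Equiv.Perm (Fin n))

/-- If `σ` maps `[0,p)` into itself, it maps `[p,n)` into itself too. -/
lemma ge_of_maps_lt (h : ∀ i (hi : i < n), i < p → (σ ⟨i, hi⟩).val < p)
    (hpn : p ≤ n) : ∀ i (hi : i < n), p ≤ i → p ≤ (σ ⟨i, hi⟩).val := by
  intro i hi hpi
  by_contra hc
  push_neg at hc
  -- the restriction of σ to Fin p is injective, hence surjective
  set f : Fin p → Fin p := fun j => ⟨(σ ⟨j.val, by omega⟩).val, h j.val (by omega) j.isLt⟩ with hf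
  have hinj : Function.Injective f := by
    intro a b hab
    have : σ ⟨a.val, by omega⟩ = σ ⟨b.val, by omega⟩ := by
      ext; simpa [hf] using congrArg Fin.val hab
    have := σ.injective this
    ext; simpa using congrArg Fin.val this
  have hsurj : Function.Surjective f := Finite.surjective_of_injective hinj
  obtain ⟨j, hj⟩ := hsurj ⟨(σ ⟨i, hi⟩).val, hc⟩
  have : σ ⟨j.val, by omega⟩ = σ ⟨i, hi⟩ := by
    ext; simpa [hf] using congrArg Fin.val hj
  have := σ.injective this
  have := congrArg Fin.val this
  simp at this
  omega

lemma split_lemma (hp0 : 0 < p) (hpn : p < n)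
    (h : ∀ i (hi : i < n), i < p → (σ ⟨i, hi⟩).val < p) :
    ∃ t u : PermSigma, t.1 = p ∧ u.1 = n - p ∧ (⟨n, σ⟩ : PermSigma) = concatProd t u := by
  have hge := ge_of_maps_lt σ h hpn.le
  set f : Fin p → Fin p := fun j => ⟨(σ ⟨j.val, by omega⟩).val, h j.val (by omega) j.isLt⟩ with hf
  have hfinj : Function.Injective f := by
    intro a b hab
    have : σ ⟨a.val, by omega⟩ = σ ⟨b.val, by omega⟩ := by
      ext; simpa [hf] using congrArg Fin.val hab
    have := σ.injective this
    ext; simpa using congrArg Fin.val this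
  set g : Fin (n - p) → Fin (n - p) := fun j =>
    ⟨(σ ⟨p + j.val, by omega⟩).val - p, by
      have h1 := (σ ⟨p + j.val, by omega⟩).isLt
      have h2 := hge (p + j.val) (by omega) (by omega)
      omega⟩ with hg
  have hginj : Function.Injective g := by
    intro a b hab
    have hv := congrArg Fin.val hab
    simp [hg] at hv
    have h2a := hge (p + a.val) (by omega) (by omega)
    have h2b := hge (p + b.val) (by omega) (by omega)
    have : σ ⟨p + a.val, by omega⟩ = σ ⟨p + b.val, by omega⟩ := by ext; omega
    have := congrArg Fin.val (σ.injective this)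
    simp at this
    ext; omega
  refine ⟨⟨p, Equiv.ofBijective f (Finite.injective_iff_bijective.mp hfinj)⟩,
    ⟨n - p, Equiv.ofBijective g (Finite.injective_iff_bijective.mp hginj)⟩, rfl, rfl, ?_⟩
  apply permSigma_ext (by change n = p + (n - p); omega)
  intro i hi
  dsimp only
  rw [blockProd_apply_val]
  by_cases h1 : i < p
  · rw [dif_pos h1]
    simp [Equiv.ofBijective, hf]
  · rw [dif_neg h1]
    simp only [Equiv.ofBijective, Equiv.coe_fn_mk, hg]
    have h2 := hge i hi (by omega)
    have : p + (i - p) = i := by omega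
    simp only [this]
    omega
end Split

lemma concatProd_one_right (s : PermSigma) : concatProd s ⟨0, 1⟩ = s := by
  obtain ⟨n, σ⟩ := s
  show (⟨n + 0, blockProd σ 1⟩ : PermSigma) = ⟨n, σ⟩
  apply permSigma_ext (by omega)
  intro i hi
  rw [blockProd_apply_val, dif_pos (show i < n by omega)]

lemma permSigma_val_eq {s t : PermSigma} (h : s = t) :
    ∀ i (hi : i < s.1) (hi' : i < t.1), (s.2 ⟨i, hi⟩).val = (t.2 ⟨i, hi'⟩).val := by
  subst h; intro i hi hi'; rfl

lemma blockProd_lt {p q : ℕ} (σ : Equiv.Perm (Fin p)) (τ : Equiv.Perm (Fin q))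
    (i : ℕ) (hi : i < p + q) (h : i < p) : ((blockProd σ τ) ⟨i, hi⟩).val < p := by
  rw [blockProd_apply_val, dif_pos h]; exact (σ ⟨i, h⟩).isLt

lemma no_bp {p : ℕ} (σ : Equiv.Perm (Fin p)) (hconn : Connected ⟨p, σ⟩) (k : ℕ)
    (hk0 : 0 < k) (hkp : k < p)
    (hbp : ∀ i (hi : i < p), i < k → (σ ⟨i, hi⟩).val < k) : False := by
  obtain ⟨t, u, ht, hu, heq⟩ := split_lemma σ hk0 hkp hbp
  exact hconn.2 ⟨t, u, by omega, by omega, heq⟩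

lemma first_size_aux {a r a' r' : PermSigma} (h0 : 0 < a.1) (ha' : Connected a')
    (heq : concatProd a r = concatProd a' r') (hlt : a.1 < a'.1) : False := by
  obtain ⟨p', σ'⟩ := a'
  apply no_bp σ' ha' a.1 h0 hlt
  intro i hi hik
  have hv := permSigma_val_eq heq i (by change i < a.1 + r.1; omega)
    (by change i < p' + r'.1; omega)
  have h1 : ((concatProd a r).2 ⟨i, by change i < a.1 + r.1; omega⟩).val < a.1 :=
    blockProd_lt a.2 r.2 i _ hik
  have h2 : ((concatProd ⟨p', σ'⟩ r').2 ⟨i, by change i < p' + r'.1; omega⟩).val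
      = (σ' ⟨i, hi⟩).val := by
    show ((blockProd σ' r'.2) ⟨i, (show i < p' + r'.1 by omega)⟩).val = _
    rw [blockProd_apply_val, dif_pos hi]
  omega

lemma first_size_eq {a r a' r' : PermSigma} (ha : Connected a) (ha' : Connected a')
    (heq : concatProd a r = concatProd a' r') : a.1 = a'.1 := by
  rcases lt_trichotomy a.1 a'.1 with h | h | h
  · exact absurd (first_size_aux ha.1 ha' heq h) not_false
  · exact h
  · exact absurd (first_size_aux ha'.1 ha heq.symm h) not_false

lemma concat_cancel {a r a' r' : PermSigma} (hsz : a.1 = a'.1)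
    (heq : concatProd a r = concatProd a' r') : a = a' ∧ r = r' := by
  have hfst : a.1 + r.1 = a'.1 + r'.1 := congrArg Sigma.fst heq
  have hv := permSigma_val_eq heq
  obtain ⟨p, σ⟩ := a; obtain ⟨p2, σ'⟩ := a'
  obtain ⟨q, τ⟩ := r; obtain ⟨q2, τ'⟩ := r'
  simp only at hsz hfst hv
  subst hsz
  have hq : q = q2 := by omega
  subst hq
  constructor
  · apply permSigma_ext rfl
    intro i hi
    have := hv i (by change i < p + q; omega) (by change i < p + q; omega)
    change ((blockProd σ τ) ⟨i, (show i < p + q by omega)⟩).val = ((blockProd σ' τ') ⟨i, (show i < p + q by omega)⟩).val at this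
    rw [blockProd_apply_val, blockProd_apply_val, dif_pos hi, dif_pos hi] at this
    exact this
  · apply permSigma_ext rfl
    intro j hj
    have := hv (p + j) (by change p + j < p + q; omega) (by change p + j < p + q; omega)
    change ((blockProd σ τ) ⟨p + j, (show p + j < p + q by omega)⟩).val = ((blockProd σ' τ') ⟨p + j, (show p + j < p + q by omega)⟩).val at this
    rw [blockProd_apply_val, blockProd_apply_val] at this
    simp only [dif_neg (show ¬ p + j < p by omega)] at this
    simp only [Nat.add_sub_cancel_left] at this
    omega

lemma foldr_concatProd (L : List PermSigma) (x : PermSigma) :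
    L.foldr concatProd x = concatProd (L.foldr concatProd ⟨0, 1⟩) x := by
  induction L with
  | nil => simp [concatProd_one_left]
  | cons a t ih => simp [List.foldr_cons, ih, concatProd_assoc]

lemma exists_fact : ∀ n (s : PermSigma), s.1 = n → 0 < s.1 →
    ∃ L : List PermSigma, L ≠ [] ∧ (∀ x ∈ L, Connected x) ∧
      L.foldr concatProd ⟨0, 1⟩ = s := by
  intro n
  induction n using Nat.strong_induction_on with
  | _ n ih =>
    intro s hn hpos
    by_cases hc : Connected s
    · exact ⟨[s], by simp, by simp [hc], by simp [concatProd_one_right]⟩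
    · have hx : ∃ t u : PermSigma, 0 < t.1 ∧ 0 < u.1 ∧ s = concatProd t u := by
        by_contra hcon
        exact hc ⟨hpos, hcon⟩
      obtain ⟨t, u, ht, hu, heq⟩ := hx
      have hfst : s.1 = t.1 + u.1 := congrArg Sigma.fst heq
      obtain ⟨Lt, hLt0, hLtc, hLtf⟩ := ih t.1 (by omega) t rfl ht
      obtain ⟨Lu, hLu0, hLuc, hLuf⟩ := ih u.1 (by omega) u rfl hu
      refine ⟨Lt ++ Lu, by simp [hLt0], ?_, ?_⟩
      · intro x hx
        rcases List.mem_append.mp hx with h | h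
        · exact hLtc x h
        · exact hLuc x h
      · rw [List.foldr_append, hLuf, foldr_concatProd, hLtf, heq]

lemma fold_fst_pos (L : List PermSigma) (hL : L ≠ [])
    (hc : ∀ x ∈ L, Connected x) : 0 < (L.foldr concatProd ⟨0, 1⟩).1 := by
  cases L with
  | nil => exact absurd rfl hL
  | cons a t =>
    have := (hc a (by simp)).1
    show 0 < a.1 + _
    omega

lemma unique_fact : ∀ L L' : List PermSigma, (∀ x ∈ L, Connected x) →
    (∀ x ∈ L', Connected x) →
    L.foldr concatProd ⟨0, 1⟩ = L'.foldr concatProd ⟨0, 1⟩ → L = L' := by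
  intro L
  induction L with
  | nil =>
    intro L' _ hc' heq
    cases L' with
    | nil => rfl
    | cons a t =>
      have h1 : (0 : ℕ) = a.1 + (t.foldr concatProd ⟨0, 1⟩).1 :=
        congrArg Sigma.fst heq
      have := (hc' a (by simp)).1
      omega
  | cons a t iht =>
    intro L' hc hc' heq
    cases L' with
    | nil =>
      have h1 : a.1 + (t.foldr concatProd ⟨0, 1⟩).1 = (0 : ℕ) :=
        congrArg Sigma.fst heq
      have := (hc a (by simp)).1
      omega
    | cons a' t' =>
      have heq' : concatProd a (t.foldr concatProd ⟨0, 1⟩)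
          = concatProd a' (t'.foldr concatProd ⟨0, 1⟩) := heq
      have hsz := first_size_eq (hc a (by simp)) (hc' a' (by simp)) heq'
      obtain ⟨h1, h2⟩ := concat_cancel hsz heq'
      have ht := iht t' (fun x hx => hc x (by simp [hx]))
        (fun x hx => hc' x (by simp [hx])) h2
      rw [h1, ht]

/-- Every permutation `σ ∈ S_n`, `n ≥ 1`, factors uniquely as a block concatenation
`σ = σ₁ × … × σ_k` of connected permutations; equivalently (freeness on connected
permutations), the product map from words in connected permutations to `⊔_n S_n`
is a bijection. -/
theorem stmt16 :
    (∀ s : PermSigma, 0 < s.1 →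
        ∃! L : List PermSigma,
          L ≠ [] ∧ (∀ x ∈ L, Connected x) ∧
            L.foldr concatProd ⟨0, 1⟩ = s) ∧
      Function.Bijective
        (fun L : List {s : PermSigma // Connected s} =>
          (L.map Subtype.val).foldr concatProd (⟨0, 1⟩ : PermSigma)) := by
  constructor
  · intro s hs
    obtain ⟨L, hL0, hLc, hLf⟩ := exists_fact s.1 s rfl hs
    refine ⟨L, ⟨hL0, hLc, hLf⟩, ?_⟩
    intro L' ⟨hL0', hLc', hLf'⟩
    exact unique_fact L' L hLc' hLc (by rw [hLf, hLf'])
  · constructor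
    · intro L L' h
      simp only at h
      have := unique_fact (L.map Subtype.val) (L'.map Subtype.val)
        (by intro x hx; obtain ⟨y, _, rfl⟩ := List.mem_map.mp hx; exact y.2)
        (by intro x hx; obtain ⟨y, _, rfl⟩ := List.mem_map.mp hx; exact y.2) h
      exact List.map_injective_iff.mpr Subtype.val_injective this
    · intro s
      by_cases hs : 0 < s.1
      · obtain ⟨L, hL0, hLc, hLf⟩ := exists_fact s.1 s rfl hs
        refine ⟨L.attachWith Connected hLc, ?_⟩
        simp only [List.attachWith_map_subtype_val (H := hLc)]
        exact hLf
      · refine ⟨[], ?_⟩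
        obtain ⟨n, σ⟩ := s
        simp only at hs
        have hn : n = 0 := by omega
        subst hn
        simp only [List.map_nil, List.foldr_nil]
        congr 1
        exact Subsingleton.elim _ _
end

section
/- In a commutative tridendriform algebra (with products ≺ and commutative ·), the product x ∗ y := x ≺ y + y ≺ x + x · y is associative and commutative. -/
/-!
Expanding `(x ∗ y) ∗ z` with the three axioms and commutativity of `·` gives
`x ≺ (y ∗ z) + y ≺ (z ∗ x) + z ≺ (x ∗ y) + (x · y) ≺ z + (y · z) ≺ x + (z · x) ≺ y + x · y · z`,
which is invariant under cyclic permutations of `x, y, z`. Hence `(x ∗ y) ∗ z = (y ∗ z) ∗ x`,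
and with commutativity of `∗` this is associativity.
-/

section

variable {R M : Type*} [CommSemiring R] [AddCommMonoid M] [Module R M]

structure IsCommTridendriform (prec dot : M →ₗ[R] M →ₗ[R] M) : Prop where
  dot_comm : ∀ x y, dot x y = dot y x
  prec_prec : ∀ x y z, prec (prec x y) z = prec x (prec y z + prec z y + dot y z)
  prec_dot : ∀ x y z, prec (dot x y) z = dot x (prec y z)
  dot_assoc : ∀ x y z, dot (dot x y) z = dot x (dot y z)

def triStar (prec dot : M →ₗ[R] M →ₗ[R] M) (x y : M) : M :=
  prec x y + prec y x + dot x y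

theorem triStar_comm {prec dot : M →ₗ[R] M →ₗ[R] M} (hdot : ∀ x y, dot x y = dot y x)
    (x y : M) : triStar prec dot x y = triStar prec dot y x := by
  rw [triStar, triStar, hdot, add_comm (prec x y)]

namespace IsCommTridendriform

variable {prec dot : M →ₗ[R] M →ₗ[R] M}

theorem prec_triStar_left (h : IsCommTridendriform prec dot) (x y z : M) :
    prec (triStar prec dot x y) z =
      prec x (triStar prec dot y z) + prec y (triStar prec dot z x) + prec (dot x y) z := by
  rw [triStar, map_add, map_add, LinearMap.add_apply, LinearMap.add_apply, h.prec_prec,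
    h.prec_prec, ← triStar, ← triStar, triStar_comm h.dot_comm x z]

theorem dot_triStar_left (h : IsCommTridendriform prec dot) (x y z : M) :
    dot (triStar prec dot x y) z = prec (dot y z) x + prec (dot z x) y + dot (dot x y) z := by
  rw [triStar, map_add, map_add, LinearMap.add_apply, LinearMap.add_apply, h.dot_comm (prec x y),
    h.dot_comm (prec y x), ← h.prec_dot, ← h.prec_dot, h.dot_comm z y, add_comm (prec (dot z x) y)]

theorem triStar_triStar (h : IsCommTridendriform prec dot) (x y z : M) :
    triStar prec dot (triStar prec dot x y) z =
      prec x (triStar prec dot y z) + prec y (triStar prec dot z x) +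
        prec z (triStar prec dot x y) + prec (dot x y) z + prec (dot y z) x +
          prec (dot z x) y + dot (dot x y) z := by
  rw [triStar.eq_1 prec dot (triStar prec dot x y) z, h.prec_triStar_left, h.dot_triStar_left]
  abel

theorem triStar_assoc (h : IsCommTridendriform prec dot) (x y z : M) :
    triStar prec dot (triStar prec dot x y) z = triStar prec dot x (triStar prec dot y z) := by
  have hxyz : dot (dot y z) x = dot (dot x y) z := by
    rw [h.dot_comm, h.dot_assoc]
  rw [triStar_comm h.dot_comm x (triStar prec dot y z), h.triStar_triStar, h.triStar_triStar, hxyz]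
  abel

end IsCommTridendriform

end

/-- In a commutative tridendriform algebra (bilinear products `≺` and commutative `·`
satisfying `(x ≺ y) ≺ z = x ≺ (y ≺ z + z ≺ y + y · z)`, `(x · y) ≺ z = x · (y ≺ z)`
and `(x · y) · z = x · (y · z)`), the product `x ∗ y = x ≺ y + y ≺ x + x · y` is
associative and commutative. -/
theorem stmt17 (k V : Type*) [Field k] [AddCommGroup V] [Module k V]
    (prec dot : V →ₗ[k] V →ₗ[k] V)
    (hdotcomm : ∀ x y : V, dot x y = dot y x)
    (h1 : ∀ x y z : V, prec (prec x y) z = prec x (prec y z + prec z y + dot y z))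
    (h2 : ∀ x y z : V, prec (dot x y) z = dot x (prec y z))
    (h3 : ∀ x y z : V, dot (dot x y) z = dot x (dot y z)) :
    (∀ x y z : V,
        (fun a b => prec a b + prec b a + dot a b)
            ((fun a b => prec a b + prec b a + dot a b) x y) z =
          (fun a b => prec a b + prec b a + dot a b) x
            ((fun a b => prec a b + prec b a + dot a b) y z)) ∧
      (∀ x y : V,
        (fun a b => prec a b + prec b a + dot a b) x y =
          (fun a b => prec a b + prec b a + dot a b) y x) :=
  have h : IsCommTridendriform prec dot := ⟨hdotcomm, h1, h2, h3⟩
  ⟨h.triStar_assoc, triStar_comm hdotcomm⟩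
end
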